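/- arXiv:1710.10174 — 4 statements merged into one kernel-verified Lean document; each statement's English description precedes it below -/
import Mathlib

section
/- If y N_W(x) < 1 at some example (x,y) of the separable dataset, then the inner product of the (sub)gradient of the single-example hinge loss with the vector W* = (w*,…,w*,−w*,…,−w*) ∈ ℝ^{2kd} is at least 2kvα > 0; in particular the gradient is nonzero. -/
open scoped RealInnerProductSpace

/-- If `y N_W(x) < 1`, the inner product of the (sub)gradient of the single-example
hinge loss with `W* = (w*,…,w*,−w*,…,−w*)` is at least `2kvα > 0`; in particular the
gradient is nonzero.  The inner product in `ℝ^{2kd}` is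
`∑ⱼ ⟪−∂L/∂wʲ, w*⟫ + ∑ⱼ ⟪−∂L/∂uʲ, −w*⟫` with `∂L/∂wʲ = −y v σ'(⟪wʲ,x⟫) x` and
`∂L/∂uʲ = y v σ'(⟪uʲ,x⟫) x`. -/
theorem stmt2 (d k : ℕ) (hk : 0 < k) (α v : ℝ) (hα0 : 0 < α) (hα1 : α < 1) (hv : 0 < v)
    (x wstar : EuclideanSpace ℝ (Fin d)) (y : ℝ) (hy : y = 1 ∨ y = -1)
    (hsep : 1 ≤ y * ⟪wstar, x⟫)
    (w u : Fin k → EuclideanSpace ℝ (Fin d))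
    (N : ℝ)
    (hN : N = v * ∑ i, max (α * ⟪w i, x⟫) ⟪w i, x⟫
            - v * ∑ i, max (α * ⟪u i, x⟫) ⟪u i, x⟫)
    (hmargin : y * N < 1) :
    (0:ℝ) < 2 * k * v * α ∧
    2 * k * v * α ≤
      (∑ j, ⟪-((-(y) * v * (if 0 ≤ ⟪w j, x⟫ then (1:ℝ) else α)) • x), wstar⟫) +
      (∑ j, ⟪-(((y) * v * (if 0 ≤ ⟪u j, x⟫ then (1:ℝ) else α)) • x), -wstar⟫) ∧
    ¬ ((∀ j : Fin k, (-(y) * v * (if 0 ≤ ⟪w j, x⟫ then (1:ℝ) else α)) • x = 0) ∧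
       (∀ j : Fin k, ((y) * v * (if 0 ≤ ⟪u j, x⟫ then (1:ℝ) else α)) • x = 0)) := by
  have hx : (1:ℝ) ≤ y * ⟪x, wstar⟫ := by rwa [real_inner_comm] at hsep
  have hky : (0:ℝ) < k := by exact_mod_cast hk
  refine ⟨by positivity, ?_, ?_⟩
  · have h1 : ∀ j : Fin k,
        (v*α) ≤ ⟪-((-(y) * v * (if 0 ≤ ⟪w j, x⟫ then (1:ℝ) else α)) • x), wstar⟫ := by
      intro j
      rw [inner_neg_left, real_inner_smul_left]
      by_cases h : 0 ≤ ⟪w j, x⟫ <;> simp only [h, if_true, if_false] <;> nlinarith [mul_le_mul_of_nonneg_left hx (by positivity : (0:ℝ) ≤ v*α), mul_le_mul_of_nonneg_left hx hv.le, hα1.le]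
    have h2 : ∀ j : Fin k,
        (v*α) ≤ ⟪-(((y) * v * (if 0 ≤ ⟪u j, x⟫ then (1:ℝ) else α)) • x), -wstar⟫ := by
      intro j
      rw [inner_neg_left, inner_neg_right, real_inner_smul_left]
      by_cases h : 0 ≤ ⟪u j, x⟫ <;> simp only [h, if_true, if_false] <;> nlinarith [mul_le_mul_of_nonneg_left hx (by positivity : (0:ℝ) ≤ v*α), mul_le_mul_of_nonneg_left hx hv.le, hα1.le]
    have s1 := Finset.sum_le_sum (s := Finset.univ) (fun j _ => h1 j)
    have s2 := Finset.sum_le_sum (s := Finset.univ) (fun j _ => h2 j)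
    simp only [Finset.sum_const, Finset.card_univ, Fintype.card_fin, nsmul_eq_mul] at s1 s2
    nlinarith [s1, s2]
  · rintro ⟨h1, h2⟩
    have hj := h1 ⟨0, hk⟩
    rcases smul_eq_zero.mp hj with hc | hx0
    · rcases hy with rfl | rfl <;> by_cases h : 0 ≤ ⟪w ⟨0, hk⟩, x⟫ <;>
        simp only [h, if_true, if_false] at hc <;> nlinarith
    · rw [hx0, inner_zero_left] at hx; linarith
end

section
/- Consider the SGD updates on the two-layer Leaky ReLU network with the hinge loss, where each non-zero update at step t takes the form wⁱ_t = wⁱ_{t−1} + ηv pᵢ y_t x_t and uⁱ_t = uⁱ_{t−1} − ηv qᵢ y_t x_t with pᵢ, qᵢ ∈ {α, 1}, performed only when y_t N_{t−1}(x_t) < 1. Then the squared Euclidean norm of the full parameter vector satisfies G(W_t)² < G(W_{t−1})² + 2η + 2kη²v², and hence G(W_t)² ≤ G(W_0)² + t(2kη²v² + 2η) after t non-zero updates. -/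
open scoped RealInnerProductSpace

/-- Norm growth bound for SGD on the two-layer Leaky ReLU network with hinge loss:
under the non-zero update `wⁱ_{t+1} = wⁱ_t + ηv pᵢ y_t x_t`, `uⁱ_{t+1} = uⁱ_t − ηv qᵢ y_t x_t`
(with `pᵢ = σ'(⟪wⁱ_t,x_t⟫)`, `qᵢ = σ'(⟪uⁱ_t,x_t⟫)`), performed only when
`y_t N_t(x_t) < 1`, we have `G(W_{t+1})² < G(W_t)² + 2η + 2kη²v²` and hence
`G(W_t)² ≤ G(W_0)² + t(2kη²v² + 2η)`. -/
theorem stmt3 (d k : ℕ) (α v η : ℝ) (hα0 : 0 < α) (hα1 : α < 1) (hv : 0 < v) (hη : 0 < η)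
    (w u : ℕ → Fin k → EuclideanSpace ℝ (Fin d))
    (x : ℕ → EuclideanSpace ℝ (Fin d)) (hx : ∀ t, ‖x t‖ ≤ 1)
    (y : ℕ → ℝ) (hy : ∀ t, y t = 1 ∨ y t = -1)
    (N : ℕ → EuclideanSpace ℝ (Fin d) → ℝ)
    (hN : ∀ t z, N t z = v * ∑ i, max (α * ⟪w t i, z⟫) ⟪w t i, z⟫
                       - v * ∑ i, max (α * ⟪u t i, z⟫) ⟪u t i, z⟫)
    -- every step is a non-zero update
    (hupd : ∀ t, y t * N t (x t) < 1)
    (hw : ∀ t i, w (t+1) i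
        = w t i + (η * v * (if 0 ≤ ⟪w t i, x t⟫ then (1:ℝ) else α) * y t) • x t)
    (hu : ∀ t i, u (t+1) i
        = u t i - (η * v * (if 0 ≤ ⟪u t i, x t⟫ then (1:ℝ) else α) * y t) • x t)
    (G2 : ℕ → ℝ)
    (hG2 : ∀ t, G2 t = ∑ i, ‖w t i‖ ^ 2 + ∑ i, ‖u t i‖ ^ 2) :
    (∀ t, G2 (t+1) < G2 t + 2 * η + 2 * k * η ^ 2 * v ^ 2) ∧
    (∀ t, G2 t ≤ G2 0 + t * (2 * k * η ^ 2 * v ^ 2 + 2 * η)) := by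
  have key : ∀ t, G2 (t+1) < G2 t + 2 * η + 2 * k * η ^ 2 * v ^ 2 := by
    intro t
    set p : Fin k → ℝ := fun i => if 0 ≤ ⟪w t i, x t⟫ then (1:ℝ) else α with hpdef
    set q : Fin k → ℝ := fun i => if 0 ≤ ⟪u t i, x t⟫ then (1:ℝ) else α with hqdef
    have hp : ∀ i, p i * ⟪w t i, x t⟫ = max (α * ⟪w t i, x t⟫) ⟪w t i, x t⟫ := by
      intro i
      simp only [hpdef]
      split_ifs with h
      · rw [one_mul, max_eq_right]; nlinarith
      · rw [max_eq_left]; nlinarith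
    have hq : ∀ i, q i * ⟪u t i, x t⟫ = max (α * ⟪u t i, x t⟫) ⟪u t i, x t⟫ := by
      intro i
      simp only [hqdef]
      split_ifs with h
      · rw [one_mul, max_eq_right]; nlinarith
      · rw [max_eq_left]; nlinarith
    have hNval : y t * N t (x t)
        = y t * v * (∑ i, p i * ⟪w t i, x t⟫) - y t * v * (∑ i, q i * ⟪u t i, x t⟫) := by
      rw [hN]
      simp only [hp, hq]
      ring
    have hwn : ∀ i, ‖w (t+1) i‖ ^ 2
        = ‖w t i‖ ^ 2 + (2 * η * v * y t) * (p i * ⟪w t i, x t⟫)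
          + (η * v * y t) ^ 2 * ‖x t‖ ^ 2 * (p i) ^ 2 := by
      intro i
      rw [hw t i, norm_add_sq_real, real_inner_smul_right, norm_smul]
      simp only [Real.norm_eq_abs, mul_pow, sq_abs, hpdef]
      ring
    have hun : ∀ i, ‖u (t+1) i‖ ^ 2
        = ‖u t i‖ ^ 2 + (-(2 * η * v * y t)) * (q i * ⟪u t i, x t⟫)
          + (η * v * y t) ^ 2 * ‖x t‖ ^ 2 * (q i) ^ 2 := by
      intro i
      rw [hu t i, norm_sub_sq_real, real_inner_smul_right, norm_smul]
      simp only [Real.norm_eq_abs, mul_pow, sq_abs, hqdef]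
      ring
    have hsumw : ∑ i, ‖w (t+1) i‖ ^ 2
        = ∑ i, ‖w t i‖ ^ 2 + (2 * η * v * y t) * (∑ i, p i * ⟪w t i, x t⟫)
          + (η * v * y t) ^ 2 * ‖x t‖ ^ 2 * (∑ i, (p i) ^ 2) := by
      simp only [hwn, Finset.sum_add_distrib, Finset.mul_sum]
    have hsumu : ∑ i, ‖u (t+1) i‖ ^ 2
        = ∑ i, ‖u t i‖ ^ 2 + (-(2 * η * v * y t)) * (∑ i, q i * ⟪u t i, x t⟫)
          + (η * v * y t) ^ 2 * ‖x t‖ ^ 2 * (∑ i, (q i) ^ 2) := by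
      simp only [hun, Finset.sum_add_distrib, Finset.mul_sum]
    have hsum : G2 (t+1) = G2 t + 2 * η * (y t * N t (x t))
        + (η * v * y t) ^ 2 * ‖x t‖ ^ 2 * ((∑ i, (p i) ^ 2) + (∑ i, (q i) ^ 2)) := by
      rw [hG2, hG2, hsumw, hsumu, hNval]
      ring
    have hy2 : (y t) ^ 2 = 1 := by rcases hy t with h | h <;> rw [h] <;> ring
    have hx2 : ‖x t‖ ^ 2 ≤ 1 := by nlinarith [hx t, norm_nonneg (x t)]
    have hx2' : (0:ℝ) ≤ ‖x t‖ ^ 2 := sq_nonneg _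
    have hpb : ∀ i, (p i) ^ 2 ≤ 1 := by
      intro i; simp only [hpdef]; split_ifs <;> nlinarith
    have hqb : ∀ i, (q i) ^ 2 ≤ 1 := by
      intro i; simp only [hqdef]; split_ifs <;> nlinarith
    have hps : (∑ i, (p i) ^ 2) ≤ (k:ℝ) := by
      calc (∑ i, (p i) ^ 2) ≤ ∑ _i : Fin k, (1:ℝ) :=
            Finset.sum_le_sum (fun i _ => hpb i)
        _ = (k:ℝ) := by simp
    have hqs : (∑ i, (q i) ^ 2) ≤ (k:ℝ) := by
      calc (∑ i, (q i) ^ 2) ≤ ∑ _i : Fin k, (1:ℝ) :=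
            Finset.sum_le_sum (fun i _ => hqb i)
        _ = (k:ℝ) := by simp
    have hpn : (0:ℝ) ≤ ∑ i, (p i) ^ 2 := Finset.sum_nonneg (fun i _ => sq_nonneg _)
    have hqn : (0:ℝ) ≤ ∑ i, (q i) ^ 2 := Finset.sum_nonneg (fun i _ => sq_nonneg _)
    have hcross : 2 * η * (y t * N t (x t)) < 2 * η := by
      have h2η : (0:ℝ) < 2 * η := by linarith
      calc 2 * η * (y t * N t (x t)) < 2 * η * 1 := by
            exact mul_lt_mul_of_pos_left (hupd t) h2η
        _ = 2 * η := by ring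
    have hquad : (η * v * y t) ^ 2 * ‖x t‖ ^ 2 * ((∑ i, (p i) ^ 2) + (∑ i, (q i) ^ 2))
        ≤ 2 * k * η ^ 2 * v ^ 2 := by
      have h1 : (η * v * y t) ^ 2 = η ^ 2 * v ^ 2 := by
        rw [mul_pow, mul_pow, hy2]; ring
      rw [h1]
      have hS : (∑ i, (p i) ^ 2) + (∑ i, (q i) ^ 2) ≤ 2 * k := by linarith
      have hSn : (0:ℝ) ≤ (∑ i, (p i) ^ 2) + (∑ i, (q i) ^ 2) := by linarith
      have h2 : ‖x t‖ ^ 2 * ((∑ i, (p i) ^ 2) + (∑ i, (q i) ^ 2)) ≤ 2 * k := by nlinarith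
      calc η ^ 2 * v ^ 2 * ‖x t‖ ^ 2 * ((∑ i, (p i) ^ 2) + (∑ i, (q i) ^ 2))
          = η ^ 2 * v ^ 2 * (‖x t‖ ^ 2 * ((∑ i, (p i) ^ 2) + (∑ i, (q i) ^ 2))) := by ring
        _ ≤ η ^ 2 * v ^ 2 * (2 * k) := by
            exact mul_le_mul_of_nonneg_left h2 (by positivity)
        _ = 2 * k * η ^ 2 * v ^ 2 := by ring
    rw [hsum]
    linarith
  refine ⟨key, ?_⟩
  intro t
  induction t with
  | zero => simp
  | succ n ih =>
    have hk := key n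
    push_cast
    push_cast at ih
    have hr : ((n:ℝ)+1) * (2 * k * η ^ 2 * v ^ 2 + 2 * η)
        = (n:ℝ) * (2 * k * η ^ 2 * v ^ 2 + 2 * η) + (2 * k * η ^ 2 * v ^ 2 + 2 * η) := by ring
    linarith
end

section
/- Combining the growth bounds F(W_t) ≥ F(W_0) + 2kηvα·t, G(W_t)² ≤ G(W_0)² + t(2kη²v² + 2η), the Cauchy–Schwarz inequality F(W_t) ≤ ‖W*‖·G(W_t) with ‖W*‖ = √(2k)‖w*‖, and the initialization bound G(W_0) ≤ √(2k)·R, the number t of non-zero SGD updates satisfies t ≤ ‖w*‖²/α² + ‖w*‖²/(kηv²α²) + √(R(8k²η²v² + 8ηk))·‖w*‖^{1.5}/(2k(ηvα)^{1.5}) + 2R‖w*‖/(ηvα). -/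
lemma quad_key {B C x : ℝ} (hB : 0 ≤ B) (hC : 0 ≤ C) (hx : 0 ≤ x)
    (h : x ≤ B * Real.sqrt x + C) : x ≤ B ^ 2 + B * Real.sqrt C + C := by
  set s := Real.sqrt x with hs_def
  set u := Real.sqrt C with hu_def
  have hs : 0 ≤ s := Real.sqrt_nonneg x
  have hu : 0 ≤ u := Real.sqrt_nonneg C
  have hs2 : s ^ 2 = x := Real.sq_sqrt hx
  have hu2 : u ^ 2 = C := Real.sq_sqrt hC
  nlinarith [sq_nonneg (s - u), sq_nonneg (s - B - u), mul_nonneg hB hs,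
    mul_nonneg hB hu, mul_nonneg hu hs, mul_nonneg (mul_nonneg hB hu) hs]

lemma rpow_three_halves {x : ℝ} (hx : 0 ≤ x) :
    x ^ ((3:ℝ)/2) = Real.sqrt (x ^ 3) := by
  rw [Real.sqrt_eq_rpow, ← Real.rpow_natCast x 3, ← Real.rpow_mul hx]
  norm_num

/-- Combining the correlation lower bound, the norm upper bound, Cauchy–Schwarz
`F(W_t) ≤ ‖W*‖ G(W_t)` with `‖W*‖ = √(2k)‖w*‖`, `F(W_0) ≥ −G(W_0)‖W*‖` and the
initialization bound `G(W_0) ≤ √(2k) R`, the number `t` of non-zero SGD updates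
satisfies
`t ≤ ‖w*‖²/α² + ‖w*‖²/(kηv²α²) + √(R(8k²η²v²+8ηk))‖w*‖^{1.5}/(2k(ηvα)^{1.5}) + 2R‖w*‖/(ηvα)`. -/
theorem stmt5 (k : ℕ) (hk : 1 ≤ k) (α v η R Wn : ℝ)
    (hα0 : 0 < α) (hα1 : α < 1) (hv : 0 < v) (hη : 0 < η) (hR : 0 < R) (hW : 0 < Wn)
    (t : ℕ) (F G : ℕ → ℝ)
    (hGnonneg : ∀ s, 0 ≤ G s)
    (hFlow : F 0 + 2 * k * η * v * α * t ≤ F t)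
    (hGup : (G t) ^ 2 ≤ (G 0) ^ 2 + t * (2 * k * η ^ 2 * v ^ 2 + 2 * η))
    (hCS : F t ≤ Real.sqrt (2 * k) * Wn * G t)
    (hCS0 : -(G 0 * (Real.sqrt (2 * k) * Wn)) ≤ F 0)
    (hG0 : G 0 ≤ Real.sqrt (2 * k) * R) :
    (t : ℝ) ≤ Wn ^ 2 / α ^ 2 + Wn ^ 2 / (k * η * v ^ 2 * α ^ 2)
      + Real.sqrt (R * (8 * k ^ 2 * η ^ 2 * v ^ 2 + 8 * η * k)) * Wn ^ ((3:ℝ)/2)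
          / (2 * k * (η * v * α) ^ ((3:ℝ)/2))
      + 2 * R * Wn / (η * v * α) := by
  have hk' : (1:ℝ) ≤ (k:ℝ) := by exact_mod_cast hk
  have hkpos : (0:ℝ) < (k:ℝ) := by linarith
  have h2k : (0:ℝ) ≤ 2 * (k:ℝ) := by linarith
  have htn : (0:ℝ) ≤ (t:ℝ) := Nat.cast_nonneg t
  set D : ℝ := 2 * (k:ℝ) * η ^ 2 * v ^ 2 + 2 * η with hD_def
  have hD : 0 < D := by positivity
  set a : ℝ := 2 * (k:ℝ) * η * v * α with ha_def
  have ha : 0 < a := by positivity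
  set c : ℝ := 4 * (k:ℝ) * R * Wn with hc_def
  have hc : 0 < c := by positivity
  set b : ℝ := Real.sqrt (2 * (k:ℝ)) * Wn * Real.sqrt D with hb_def
  have hb : 0 ≤ b := by positivity
  -- bound on G t
  have hGt : G t ≤ G 0 + Real.sqrt t * Real.sqrt D := by
    have h1 : G t ≤ Real.sqrt ((G 0) ^ 2 + t * D) := by
      rw [← Real.sqrt_sq (hGnonneg t)]
      exact Real.sqrt_le_sqrt hGup
    have h2 : Real.sqrt ((G 0) ^ 2 + t * D) ≤ G 0 + Real.sqrt ((t:ℝ) * D) := by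
      have hle : (G 0) ^ 2 + (t:ℝ) * D ≤ (G 0 + Real.sqrt ((t:ℝ) * D)) ^ 2 := by
        have h3 : Real.sqrt ((t:ℝ) * D) ^ 2 = (t:ℝ) * D :=
          Real.sq_sqrt (by positivity)
        nlinarith [mul_nonneg (hGnonneg 0) (Real.sqrt_nonneg ((t:ℝ) * D))]
      calc Real.sqrt ((G 0) ^ 2 + t * D) ≤ Real.sqrt ((G 0 + Real.sqrt ((t:ℝ) * D)) ^ 2) :=
            Real.sqrt_le_sqrt hle
        _ = G 0 + Real.sqrt ((t:ℝ) * D) := Real.sqrt_sq (by have := hGnonneg 0; positivity)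
    rw [Real.sqrt_mul htn] at h2
    linarith
  -- main quadratic inequality
  have key : a * t ≤ b * Real.sqrt t + c := by
    have hsq : Real.sqrt (2 * (k:ℝ)) * Real.sqrt (2 * (k:ℝ)) = 2 * (k:ℝ) :=
      Real.mul_self_sqrt h2k
    have hsw : (0:ℝ) ≤ Real.sqrt (2 * (k:ℝ)) * Wn := by positivity
    have e1 : Real.sqrt (2 * (k:ℝ)) * Wn * G t ≤
        Real.sqrt (2 * (k:ℝ)) * Wn * (G 0 + Real.sqrt t * Real.sqrt D) :=
      mul_le_mul_of_nonneg_left hGt hsw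
    have e2 : Real.sqrt (2 * (k:ℝ)) * Wn * G 0 ≤
        Real.sqrt (2 * (k:ℝ)) * Wn * (Real.sqrt (2 * (k:ℝ)) * R) :=
      mul_le_mul_of_nonneg_left hG0 hsw
    have e3 : Real.sqrt (2 * (k:ℝ)) * Wn * (Real.sqrt (2 * (k:ℝ)) * R) = 2 * (k:ℝ) * R * Wn := by
      rw [show Real.sqrt (2 * (k:ℝ)) * Wn * (Real.sqrt (2 * (k:ℝ)) * R)
        = Real.sqrt (2 * (k:ℝ)) * Real.sqrt (2 * (k:ℝ)) * (Wn * R) by ring, hsq]; ring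
    have e4 : Real.sqrt (2 * (k:ℝ)) * Wn * (G 0 + Real.sqrt t * Real.sqrt D)
        = Real.sqrt (2 * (k:ℝ)) * Wn * G 0 + b * Real.sqrt t := by
      rw [hb_def]; ring
    linarith
  have ht : (t:ℝ) ≤ (b / a) ^ 2 + (b / a) * Real.sqrt (c / a) + c / a := by
    apply quad_key (by positivity) (by positivity) htn
    rw [div_mul_eq_mul_div, ← add_div, le_div_iff₀ ha]
    linarith
  -- nonzero facts
  have hk0 : (k:ℝ) ≠ 0 := hkpos.ne'
  have hα' : α ≠ 0 := hα0.ne'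
  have hv' : v ≠ 0 := hv.ne'
  have hη' : η ≠ 0 := hη.ne'
  have hb2 : b ^ 2 = 2 * (k:ℝ) * Wn ^ 2 * D := by
    rw [hb_def, mul_pow, mul_pow, Real.sq_sqrt h2k, Real.sq_sqrt hD.le]
  have eq1 : (b / a) ^ 2 = Wn ^ 2 / α ^ 2 + Wn ^ 2 / ((k:ℝ) * η * v ^ 2 * α ^ 2) := by
    rw [div_pow, hb2, hD_def, ha_def]
    field_simp
    try ring
  have eq3 : c / a = 2 * R * Wn / (η * v * α) := by
    rw [hc_def, ha_def]
    field_simp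
    try ring
  have hηvα : (0:ℝ) < η * v * α := by positivity
  have eq2 : (b / a) * Real.sqrt (c / a)
      = Real.sqrt (R * (8 * (k:ℝ) ^ 2 * η ^ 2 * v ^ 2 + 8 * η * (k:ℝ))) * Wn ^ ((3:ℝ)/2)
          / (2 * (k:ℝ) * (η * v * α) ^ ((3:ℝ)/2)) := by
    set L : ℝ := (b / a) * Real.sqrt (c / a) with hL_def
    set T : ℝ := Real.sqrt (R * (8 * (k:ℝ) ^ 2 * η ^ 2 * v ^ 2 + 8 * η * (k:ℝ))) * Wn ^ ((3:ℝ)/2)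
          / (2 * (k:ℝ) * (η * v * α) ^ ((3:ℝ)/2)) with hT_def
    have hLn : 0 ≤ L := by positivity
    have hTn : 0 ≤ T := by
      rw [hT_def]
      positivity
    have hLsq : L ^ 2 = b ^ 2 / a ^ 2 * (c / a) := by
      rw [hL_def, mul_pow, Real.sq_sqrt (by positivity : (0:ℝ) ≤ c / a), div_pow]
    have hTsq : T ^ 2 = R * (8 * (k:ℝ) ^ 2 * η ^ 2 * v ^ 2 + 8 * η * (k:ℝ)) * Wn ^ 3
        / ((2 * (k:ℝ)) ^ 2 * (η * v * α) ^ 3) := by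
      rw [hT_def, div_pow, mul_pow, mul_pow,
        Real.sq_sqrt (by positivity : (0:ℝ) ≤ R * (8 * (k:ℝ) ^ 2 * η ^ 2 * v ^ 2 + 8 * η * (k:ℝ))),
        rpow_three_halves hW.le, rpow_three_halves hηvα.le,
        Real.sq_sqrt (by positivity : (0:ℝ) ≤ Wn ^ 3),
        Real.sq_sqrt (by positivity : (0:ℝ) ≤ (η * v * α) ^ 3)]
      try ring
    have hsqeq : L ^ 2 = T ^ 2 := by
      rw [hLsq, hTsq, hb2, hD_def, ha_def, hc_def]
      field_simp
      try ring
    calc L = Real.sqrt (L ^ 2) := (Real.sqrt_sq hLn).symm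
      _ = Real.sqrt (T ^ 2) := by rw [hsqeq]
      _ = T := Real.sqrt_sq hTn
  rw [eq1, eq2, eq3] at ht
  linarith
end

section
/- In the ReLU setting with training examples from the standard basis {e₁,…,e_d} all labeled +1, the set K_t = {e_j : ⟨wⁱ_t, e_j⟩ ≤ 0 for all i ∈ [k]} is invariant under SGD updates: K_{t+1} = K_t for every t. -/
open scoped RealInnerProductSpace

/-! An update adds `η e_j` only to neurons with `⟪w, e_j⟫ > 0`: it keeps that coordinate
positive and, by orthonormality, leaves every other coordinate `⟪w, e_ℓ⟫` unchanged. -/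

theorem Orthonormal.inner_add_smul_nonpos_iff {ι E : Type*} [NormedAddCommGroup E]
    [InnerProductSpace ℝ E] {e : ι → E} (he : Orthonormal ℝ e) {x : E} {j : ι}
    (hx : 0 < ⟪x, e j⟫) {η : ℝ} (hη : 0 ≤ η) (ℓ : ι) :
    ⟪x + η • e j, e ℓ⟫ ≤ 0 ↔ ⟪x, e ℓ⟫ ≤ 0 := by
  rw [inner_add_left, real_inner_smul_left]
  rcases eq_or_ne j ℓ with rfl | hjℓ
  · rw [real_inner_self_eq_norm_sq, he.1 j, one_pow, mul_one]
    exact iff_of_false (by linarith) (by linarith)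
  · rw [he.2 hjℓ, mul_zero, add_zero]

theorem stmt11_general (d k : ℕ) (η : ℝ) (hη : 0 < η) (j : Fin d)
    (w w' : Fin k → EuclideanSpace ℝ (Fin d))
    (N : ℝ)
    (hw' : ∀ i, w' i =
      if 1 ≤ N then w i
      else if 0 < ⟪w i, EuclideanSpace.single j (1:ℝ)⟫ then
        w i + η • EuclideanSpace.single j (1:ℝ)
      else w i) :
    ∀ ℓ : Fin d,
      (∀ i, ⟪w' i, EuclideanSpace.single ℓ (1:ℝ)⟫ ≤ 0) ↔
      (∀ i, ⟪w i, EuclideanSpace.single ℓ (1:ℝ)⟫ ≤ 0) := by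
  intro ℓ
  refine forall_congr' fun i ↦ ?_
  rw [hw' i]
  split_ifs with _ hpos
  · rfl
  · exact (EuclideanSpace.orthonormal_single (𝕜 := ℝ) (ι := Fin d)).inner_add_smul_nonpos_iff
      hpos hη.le ℓ
  · rfl

/-- Invariance of `K_t = {e_ℓ : ⟪wⁱ, e_ℓ⟫ ≤ 0 for all i}` under one SGD step of the
ReLU network on orthonormal examples `e_j` labeled `+1`: if the example `e_j` is
presented (no update when `N_W(e_j) ≥ 1`, otherwise each `wⁱ` with `⟪wⁱ,e_j⟫ > 0`
gets `+η e_j`), then the set `K` is unchanged. -/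
theorem stmt11 (d k : ℕ) (η : ℝ) (hη : 0 < η) (j : Fin d)
    (w u w' : Fin k → EuclideanSpace ℝ (Fin d))
    (N : ℝ)
    (hN : N = ∑ i, max ⟪w i, EuclideanSpace.single j (1:ℝ)⟫ 0
            - ∑ i, max ⟪u i, EuclideanSpace.single j (1:ℝ)⟫ 0)
    (hw' : ∀ i, w' i =
      if 1 ≤ N then w i
      else if 0 < ⟪w i, EuclideanSpace.single j (1:ℝ)⟫ then
        w i + η • EuclideanSpace.single j (1:ℝ)
      else w i) :
    ∀ ℓ : Fin d,
      (∀ i, ⟪w' i, EuclideanSpace.single ℓ (1:ℝ)⟫ ≤ 0) ↔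
      (∀ i, ⟪w i, EuclideanSpace.single ℓ (1:ℝ)⟫ ≤ 0) :=
  stmt11_general d k η hη j w w' N hw'
end
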